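/- arXiv:2010.05181 — 4 statements merged into one kernel-verified Lean document; each statement's English description precedes it below -/
import Mathlib

section
/- Let q₀ = (1/2, √3/2), q₁ = (0,0), q₂ = (1,0) in ℝ², ρ = (√5−1)/2, and define F₀(x) = ρ²(x − q₀) + q₀, F₁(x) = ρ(x − q₁) + q₁, F₂(x) = ρ(x − q₂) + q₂. Then F₁ ∘ F₂ ∘ F₂ = F₂ ∘ F₁ ∘ F₁ as maps on ℝ². -/
theorem stmt_1 (ρ : ℝ) (hρ : ρ = (Real.sqrt 5 - 1) / 2)
    (q₀ q₁ q₂ : ℝ × ℝ)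
    (hq₀ : q₀ = (1/2, Real.sqrt 3 / 2)) (hq₁ : q₁ = (0, 0)) (hq₂ : q₂ = (1, 0))
    (F₀ F₁ F₂ : ℝ × ℝ → ℝ × ℝ)
    (hF₀ : ∀ x, F₀ x = ρ ^ 2 • (x - q₀) + q₀)
    (hF₁ : ∀ x, F₁ x = ρ • (x - q₁) + q₁)
    (hF₂ : ∀ x, F₂ x = ρ • (x - q₂) + q₂) :
    F₁ ∘ F₂ ∘ F₂ = F₂ ∘ F₁ ∘ F₁ := by
  have h5 : Real.sqrt 5 ^ 2 = 5 := Real.sq_sqrt (by norm_num)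
  have key : ρ ^ 2 + ρ = 1 := by rw [hρ]; nlinarith [h5]
  funext x
  obtain ⟨a, b⟩ := x
  simp only [Function.comp, hF₁, hF₂, hq₁, hq₂, Prod.mk_sub_mk, Prod.smul_mk,
    Prod.mk_add_mk, smul_eq_mul, Prod.mk.injEq]
  constructor <;> first | trivial | nlinarith [key]
end

section
/- Let ρ = (√5−1)/2 and let aₙ = #{w ∈ {1,2}ⁿ × {0} : the maps F_w are pairwise distinct representatives}, i.e. aₙ = #W_{1,n} counts distinct maps F_{w₁}∘⋯∘F_{wₙ}∘F₀ with wᵢ ∈ {1,2}. Then there are constants c₁, c₂ > 0 such that c₁ ρ^{−n} ≤ aₙ ≤ c₂ ρ^{−n} for all n ≥ 1. (Equivalently: the number of distinct words of length n modulo the relation F₁F₂F₂ = F₂F₁F₁ grows like ρ^{−n} = φⁿ where φ is the golden ratio.) -/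
/-!
Every map `F_w` is `x ↦ ρⁿ • F₀ x + (1 - ρⁿ) • q₁ + ((1 - ρ) t) • (q₂ - q₁)` with
`t = ∑ εᵢ ρⁱ` for the digits `εᵢ ∈ {0, 1}` of `w`, so `aₙ` is the number of such digit sums.
Since `ρ² = 1 - ρ`, we have `ρⁱ = ±(F_{i+1} - F_i (1 + ρ))`, so every digit sum is `A + Bρ` with
`A, B ∈ ℤ` and `|B| < F_{n+1}`; it lies in `[0, 3)`, and for fixed `B` its integer part determines
it, which gives `aₙ ≤ 9 F_{n+1}`. Conversely, digit strings without two consecutive ones have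
pairwise distinct sums (those starting with `0` sum to less than `1`, those starting with `10` to
at least `1`), and there are `F_{n+2}` of them.
Finally `ρ⁻¹ = φ` and `φⁿ ≤ F_{n+2}`, `F_{n+1} ≤ φⁿ`.
-/

open Finset Real goldenRatio

section DigitSums

variable (ρ : ℝ)

-- `∑ εᵢ ρⁱ` over `ε ∈ {0, 1}ⁿ`, recursing on the first digit
noncomputable def wordValues : ℕ → Finset ℝ
  | 0 => {0}
  | n + 1 => (wordValues n).image (ρ * ·) ∪ (wordValues n).image (1 + ρ * ·)

-- the same sums over strings without two consecutive ones, which begin with `0` or with `10`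
noncomputable def sparseWordValues : ℕ → Finset ℝ
  | 0 => {0}
  | 1 => {0, 1}
  | n + 2 => (sparseWordValues (n + 1)).image (ρ * ·) ∪ (sparseWordValues n).image (1 + ρ ^ 2 * ·)

variable {ρ}

theorem mem_wordValues_succ {n : ℕ} {x : ℝ} :
    x ∈ wordValues ρ (n + 1) ↔ ∃ y ∈ wordValues ρ n, x = ρ * y ∨ x = 1 + ρ * y := by
  simp only [wordValues, mem_union, mem_image]
  grind

theorem mem_Ico_of_mem_wordValues (hρ₀ : 0 ≤ ρ) (hρ₂₃ : ρ < 2 / 3) :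
    ∀ {n : ℕ} {x : ℝ}, x ∈ wordValues ρ n → 0 ≤ x ∧ x < 3
  | 0, x, hx => by simp_all [wordValues]
  | n + 1, x, hx => by
    obtain ⟨y, hy, rfl | rfl⟩ := mem_wordValues_succ.mp hx <;>
    · obtain ⟨hy₀, hy₃⟩ := mem_Ico_of_mem_wordValues hρ₀ hρ₂₃ hy
      constructor <;> nlinarith

-- recursion on the last digit
theorem exists_mem_wordValues_eq_or_eq_add_pow :
    ∀ {n : ℕ} {x : ℝ}, x ∈ wordValues ρ (n + 1) →
      ∃ y ∈ wordValues ρ n, x = y ∨ x = y + ρ ^ n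
  | 0, x, hx => by
    obtain ⟨y, hy, rfl | rfl⟩ := mem_wordValues_succ.mp hx <;>
    · rw [wordValues, mem_singleton] at hy
      subst hy
      exact ⟨0, mem_singleton_self 0, by norm_num⟩
  | n + 1, x, hx => by
    obtain ⟨z, hz, hxz⟩ := mem_wordValues_succ.mp hx
    obtain ⟨y, hy, hzy⟩ := exists_mem_wordValues_eq_or_eq_add_pow hz
    rcases hzy with rfl | rfl <;> rcases hxz with rfl | rfl
    · exact ⟨ρ * z, mem_wordValues_succ.mpr ⟨z, hy, .inl rfl⟩, .inl rfl⟩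
    · exact ⟨1 + ρ * z, mem_wordValues_succ.mpr ⟨z, hy, .inr rfl⟩, .inl rfl⟩
    · exact ⟨ρ * y, mem_wordValues_succ.mpr ⟨y, hy, .inl rfl⟩, .inr (by ring)⟩
    · exact ⟨1 + ρ * y, mem_wordValues_succ.mpr ⟨y, hy, .inr rfl⟩, .inr (by ring)⟩

theorem pow_eq_neg_one_pow_mul_fib (hρ : ρ ^ 2 + ρ = 1) :
    ∀ n : ℕ, ρ ^ n = (-1) ^ n * (Nat.fib (n + 1) - Nat.fib n * (1 + ρ))
  | 0 => by simp
  | n + 1 => by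
    rw [pow_succ, pow_eq_neg_one_pow_mul_fib hρ n, Nat.fib_add_two, Nat.cast_add]
    linear_combination (-(-1) ^ n * (Nat.fib n : ℝ)) * hρ

theorem exists_int_repr_of_mem_wordValues (hρ : ρ ^ 2 + ρ = 1) :
    ∀ {n : ℕ} {x : ℝ}, x ∈ wordValues ρ n → ∃ A B : ℤ, x = A + B * ρ ∧ |B| < Nat.fib (n + 1)
  | 0, x, hx => ⟨0, 0, by simp_all [wordValues]⟩
  | n + 1, x, hx => by
    obtain ⟨y, hy, rfl | rfl⟩ := exists_mem_wordValues_eq_or_eq_add_pow hx <;>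
    obtain ⟨A, B, rfl, hB⟩ := exists_int_repr_of_mem_wordValues hρ hy
    · have hfib : Nat.fib (n + 1) ≤ Nat.fib (n + 2) := Nat.fib_mono (by omega)
      exact ⟨A, B, rfl, hB.trans_le (by exact_mod_cast hfib)⟩
    · have hfib : (Nat.fib (n + 1 + 1) : ℤ) = Nat.fib n + Nat.fib (n + 1) := by
        exact_mod_cast Nat.fib_add_two
      refine ⟨A + (-1) ^ n * (Nat.fib (n + 1) - Nat.fib n), B - (-1) ^ n * Nat.fib n, ?_, ?_⟩
      · rw [pow_eq_neg_one_pow_mul_fib hρ]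
        push_cast
        ring
      · rw [abs_lt] at hB ⊢
        rcases neg_one_pow_eq_or ℤ n with h | h <;> rw [h] <;> omega

theorem card_le_of_forall_eq_int_add_int_mul {s : Finset ℝ} {k M : ℕ}
    (hs : ∀ x ∈ s, 0 ≤ x ∧ x < k) (hrepr : ∀ x ∈ s, ∃ A B : ℤ, x = A + B * ρ ∧ |B| ≤ M) :
    #s ≤ (2 * M + 1) * k := by
  choose! A B hAB hB using hrepr
  have hmaps : Set.MapsTo (fun x => (B x, ⌊x⌋)) s ↑(Icc (-(M : ℤ)) M ×ˢ Ico 0 (k : ℤ)) := by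
    intro x hx
    simp only [coe_product, coe_Icc, coe_Ico, Set.mem_prod, Set.mem_Icc, Set.mem_Ico]
    exact ⟨abs_le.mp (hB x hx), Int.floor_nonneg.mpr (hs x hx).1, Int.floor_lt.mpr (hs x hx).2⟩
  -- two elements with the same `B` differ by an integer
  have hinj : Set.InjOn (fun x => (B x, ⌊x⌋)) s := by
    intro x hx y hy hxy
    obtain ⟨hBxy, hfloor⟩ := Prod.ext_iff.mp hxy
    have hxy_sub : x - y = ((A x - A y : ℤ) : ℝ) := by
      have hx' := hAB x hx
      have hy' := hAB y hy
      simp only at hBxy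
      rw [hBxy] at hx'
      push_cast
      linarith
    have hA : A x - A y = 0 := by
      rw [← Int.abs_lt_one_iff, ← Int.cast_lt (R := ℝ), Int.cast_abs, ← hxy_sub]
      exact_mod_cast Int.abs_sub_lt_one_of_floor_eq_floor hfloor
    rw [hA, Int.cast_zero] at hxy_sub
    linarith
  calc #s ≤ #(Icc (-(M : ℤ)) M ×ˢ Ico 0 (k : ℤ)) := card_le_card_of_injOn _ hmaps hinj
    _ = (2 * M + 1) * k := by rw [card_product, Int.card_Icc, Int.card_Ico]; congr 1; omega

theorem card_wordValues_le (hρ₀ : 0 ≤ ρ) (hρ₂₃ : ρ < 2 / 3) (hρ : ρ ^ 2 + ρ = 1) (n : ℕ) :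
    #(wordValues ρ n) ≤ 9 * Nat.fib (n + 1) := by
  have hfib_pos : 0 < Nat.fib (n + 1) := Nat.fib_pos.mpr (by omega)
  have := card_le_of_forall_eq_int_add_int_mul (s := wordValues ρ n) (k := 3) (M := Nat.fib (n + 1))
    (fun x hx => by exact_mod_cast mem_Ico_of_mem_wordValues hρ₀ hρ₂₃ hx)
    (fun x hx => by
      obtain ⟨A, B, hx, hB⟩ := exists_int_repr_of_mem_wordValues hρ hx
      exact ⟨A, B, hx, hB.le⟩)
  omega

theorem sparseWordValues_subset_wordValues : ∀ n, sparseWordValues ρ n ⊆ wordValues ρ n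
  | 0 => subset_refl _
  | 1 => by intro x; simp [sparseWordValues, wordValues]
  | n + 2 => by
    intro x hx
    simp only [sparseWordValues, mem_union, mem_image] at hx
    rcases hx with ⟨y, hy, rfl⟩ | ⟨y, hy, rfl⟩
    · exact mem_wordValues_succ.mpr ⟨y, sparseWordValues_subset_wordValues (n + 1) hy, .inl rfl⟩
    · have hρy : ρ * y ∈ wordValues ρ (n + 1) :=
        mem_wordValues_succ.mpr ⟨y, sparseWordValues_subset_wordValues n hy, .inl rfl⟩
      exact mem_wordValues_succ.mpr ⟨ρ * y, hρy, .inr (by ring)⟩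

theorem mem_Ico_of_mem_sparseWordValues (hρ₀ : 0 < ρ) (hρ : ρ ^ 2 + ρ = 1) :
    ∀ {n : ℕ} {x : ℝ}, x ∈ sparseWordValues ρ n → 0 ≤ x ∧ x < 1 + ρ
  | 0, x, hx => by
    rw [sparseWordValues, mem_singleton] at hx
    subst hx
    constructor <;> linarith
  | 1, x, hx => by
    simp only [sparseWordValues, mem_insert, mem_singleton] at hx
    rcases hx with rfl | rfl <;> constructor <;> linarith
  | n + 2, x, hx => by
    simp only [sparseWordValues, mem_union, mem_image] at hx
    rcases hx with ⟨y, hy, rfl⟩ | ⟨y, hy, rfl⟩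
    · obtain ⟨hy₀, hy₁⟩ := mem_Ico_of_mem_sparseWordValues hρ₀ hρ hy
      constructor <;> nlinarith
    · obtain ⟨hy₀, hy₁⟩ := mem_Ico_of_mem_sparseWordValues hρ₀ hρ hy
      have : ρ ^ 2 * (1 + ρ) = ρ := by linear_combination ρ * hρ
      constructor <;> nlinarith [mul_lt_mul_of_pos_left hy₁ (pow_pos hρ₀ 2)]

theorem card_sparseWordValues (hρ₀ : 0 < ρ) (hρ : ρ ^ 2 + ρ = 1) :
    ∀ n, #(sparseWordValues ρ n) = Nat.fib (n + 2)
  | 0 => rfl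
  | 1 => card_pair zero_ne_one
  | n + 2 => by
    have hdisj : Disjoint ((sparseWordValues ρ (n + 1)).image (ρ * ·))
        ((sparseWordValues ρ n).image (1 + ρ ^ 2 * ·)) := by
      simp only [disjoint_left, mem_image]
      rintro _ ⟨y, hy, rfl⟩ ⟨z, hz, hyz⟩
      have := mem_Ico_of_mem_sparseWordValues hρ₀ hρ hy
      have := mem_Ico_of_mem_sparseWordValues hρ₀ hρ hz
      nlinarith
    have hinj : Function.Injective (fun x : ℝ => 1 + ρ ^ 2 * x) :=
      (add_right_injective 1).comp (mul_right_injective₀ (pow_ne_zero 2 hρ₀.ne'))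
    rw [sparseWordValues, card_union_of_disjoint hdisj,
      card_image_of_injective _ (mul_right_injective₀ hρ₀.ne'), card_image_of_injective _ hinj,
      card_sparseWordValues hρ₀ hρ (n + 1), card_sparseWordValues hρ₀ hρ n,
      Nat.fib_add_two (n := n + 2)]
    ring

theorem fib_le_card_wordValues (hρ₀ : 0 < ρ) (hρ : ρ ^ 2 + ρ = 1) (n : ℕ) :
    Nat.fib (n + 2) ≤ #(wordValues ρ n) :=
  card_sparseWordValues hρ₀ hρ n ▸ card_le_card (sparseWordValues_subset_wordValues n)

end DigitSums

section Compositions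

variable {α : Type*}

def compWords (f₀ f₁ f₂ : α → α) (n : ℕ) : Set (α → α) :=
  {g | ∃ w : Fin n → Fin 2, g = (List.ofFn fun i => if w i = 0 then f₁ else f₂).foldr (· ∘ ·) f₀}

theorem compWords_zero (f₀ f₁ f₂ : α → α) : compWords f₀ f₁ f₂ 0 = {f₀} := by
  simp [compWords]

theorem compWords_succ (f₀ f₁ f₂ : α → α) (n : ℕ) :
    compWords f₀ f₁ f₂ (n + 1) =
      (f₁ ∘ ·) '' compWords f₀ f₁ f₂ n ∪ (f₂ ∘ ·) '' compWords f₀ f₁ f₂ n := by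
  ext g
  simp only [compWords, Set.mem_union, Set.mem_image, Set.mem_ofPred_eq]
  constructor
  · rintro ⟨w, rfl⟩
    rw [List.ofFn_succ, List.foldr_cons]
    by_cases hw : w 0 = 0
    · exact .inl ⟨_, ⟨Fin.tail w, rfl⟩, by rw [if_pos hw]; rfl⟩
    · exact .inr ⟨_, ⟨Fin.tail w, rfl⟩, by rw [if_neg hw]; rfl⟩
  · rintro (⟨_, ⟨w, rfl⟩, rfl⟩ | ⟨_, ⟨w, rfl⟩, rfl⟩)
    · exact ⟨Fin.cons 0 w, by simp [List.ofFn_succ]⟩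
    · exact ⟨Fin.cons 1 w, by simp [List.ofFn_succ]⟩

end Compositions

section Similarities

variable {E : Type*} [AddCommGroup E] [Module ℝ E]

def wordMap (ρ : ℝ) (f₀ : E → E) (q₁ q₂ : E) (n : ℕ) (t : ℝ) : E → E :=
  fun x => ρ ^ n • f₀ x + (1 - ρ ^ n) • q₁ + ((1 - ρ) * t) • (q₂ - q₁)

variable {ρ : ℝ} {f₀ F₁ F₂ : E → E} {q₁ q₂ : E}

theorem homothety_fst_comp_wordMap (hF₁ : ∀ x, F₁ x = ρ • (x - q₁) + q₁) (n : ℕ) (t : ℝ) :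
    F₁ ∘ wordMap ρ f₀ q₁ q₂ n t = wordMap ρ f₀ q₁ q₂ (n + 1) (ρ * t) := by
  funext x
  simp only [Function.comp_apply, hF₁, wordMap]
  module

theorem homothety_snd_comp_wordMap (hF₂ : ∀ x, F₂ x = ρ • (x - q₂) + q₂) (n : ℕ) (t : ℝ) :
    F₂ ∘ wordMap ρ f₀ q₁ q₂ n t = wordMap ρ f₀ q₁ q₂ (n + 1) (1 + ρ * t) := by
  funext x
  simp only [Function.comp_apply, hF₂, wordMap]
  module

theorem wordMap_injective (hρ : ρ ≠ 1) (hq : q₁ ≠ q₂) (n : ℕ) :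
    Function.Injective (wordMap ρ f₀ q₁ q₂ n) := by
  intro t t' h
  have h₀ := add_left_cancel (congrFun h 0)
  have := smul_left_injective ℝ (sub_ne_zero.mpr hq.symm) h₀
  exact mul_left_cancel₀ (sub_ne_zero.mpr hρ.symm) this

theorem compWords_eq_image_wordValues (hF₁ : ∀ x, F₁ x = ρ • (x - q₁) + q₁)
    (hF₂ : ∀ x, F₂ x = ρ • (x - q₂) + q₂) :
    ∀ n, compWords f₀ F₁ F₂ n = wordMap ρ f₀ q₁ q₂ n '' wordValues ρ n
  | 0 => by
    rw [compWords_zero, wordValues, coe_singleton, Set.image_singleton]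
    congr 1
    funext x
    simp [wordMap]
  | n + 1 => by
    rw [compWords_succ, compWords_eq_image_wordValues hF₁ hF₂ n, wordValues, coe_union,
      coe_image, coe_image, Set.image_union, Set.image_image, Set.image_image,
      Set.image_image, Set.image_image]
    simp only [homothety_fst_comp_wordMap hF₁, homothety_snd_comp_wordMap hF₂]

theorem ncard_compWords (hρ : ρ ≠ 1) (hq : q₁ ≠ q₂) (hF₁ : ∀ x, F₁ x = ρ • (x - q₁) + q₁)
    (hF₂ : ∀ x, F₂ x = ρ • (x - q₂) + q₂) (n : ℕ) :
    (compWords f₀ F₁ F₂ n).ncard = #(wordValues ρ n) := by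
  rw [compWords_eq_image_wordValues hF₁ hF₂, Set.ncard_image_of_injective _
    (wordMap_injective hρ hq n), Set.ncard_coe_finset]

end Similarities

theorem goldenRatio_pow_le_fib_add_two (n : ℕ) : φ ^ n ≤ Nat.fib (n + 2) := by
  rw [← fib_succ_sub_goldenConj_mul_fib, Nat.fib_add_two, Nat.cast_add]
  nlinarith [neg_one_lt_goldenConj, (Nat.cast_nonneg (Nat.fib n) : (0 : ℝ) ≤ _)]

theorem fib_succ_le_goldenRatio_pow (n : ℕ) : (Nat.fib (n + 1) : ℝ) ≤ φ ^ n := by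
  rw [← fib_succ_sub_goldenConj_mul_fib]
  nlinarith [goldenConj_neg, (Nat.cast_nonneg (Nat.fib n) : (0 : ℝ) ≤ _)]

theorem stmt_2_general (ρ : ℝ) (hρ : ρ = (Real.sqrt 5 - 1) / 2)
    (q₁ q₂ : ℝ × ℝ)
    (hq₁ : q₁ = (0, 0)) (hq₂ : q₂ = (1, 0))
    (F₀ F₁ F₂ : ℝ × ℝ → ℝ × ℝ)
    (hF₁ : ∀ x, F₁ x = ρ • (x - q₁) + q₁)
    (hF₂ : ∀ x, F₂ x = ρ • (x - q₂) + q₂)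
    (a : ℕ → ℕ)
    (ha : ∀ n, a n = Set.ncard {g : ℝ × ℝ → ℝ × ℝ |
      ∃ w : Fin n → Fin 2,
        g = (List.ofFn fun i => if w i = 0 then F₁ else F₂).foldr (· ∘ ·) F₀}) :
    ∃ c₁ c₂ : ℝ, 0 < c₁ ∧ 0 < c₂ ∧
      ∀ n : ℕ, 1 ≤ n → c₁ * ρ ^ (-(n : ℝ)) ≤ (a n : ℝ) ∧ (a n : ℝ) ≤ c₂ * ρ ^ (-(n : ℝ)) := by
  have h5 : √5 ^ 2 = 5 := sq_sqrt (by norm_num)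
  have h5₂ : 2 < √5 := by nlinarith [sqrt_nonneg 5]
  have hρ₀ : 0 < ρ := by rw [hρ]; linarith
  have hρ₂₃ : ρ < 2 / 3 := by rw [hρ]; nlinarith
  have hρsq : ρ ^ 2 + ρ = 1 := by rw [hρ]; linear_combination h5 / 4
  have hpow (n : ℕ) : ρ ^ (-(n : ℝ)) = φ ^ n := by
    have hρφ : ρ = φ⁻¹ := by rw [inv_goldenRatio, hρ, goldenConj]; ring
    rw [rpow_neg hρ₀.le, rpow_natCast, hρφ, inv_pow, inv_inv]
  have hcard (n : ℕ) : a n = #(wordValues ρ n) :=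
    (ha n).trans (ncard_compWords (by linarith : ρ < 1).ne (by simp [hq₁, hq₂]) hF₁ hF₂ n)
  refine ⟨1, 9, one_pos, by norm_num, fun n _ => ?_⟩
  rw [hpow, hcard, one_mul]
  constructor
  · calc φ ^ n ≤ Nat.fib (n + 2) := goldenRatio_pow_le_fib_add_two n
      _ ≤ #(wordValues ρ n) := by exact_mod_cast fib_le_card_wordValues hρ₀ hρsq n
  · calc (#(wordValues ρ n) : ℝ) ≤ 9 * Nat.fib (n + 1) := by
          exact_mod_cast card_wordValues_le hρ₀.le hρ₂₃ hρsq n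
      _ ≤ 9 * φ ^ n := by gcongr; exact fib_succ_le_goldenRatio_pow n

theorem stmt_2 (ρ : ℝ) (hρ : ρ = (Real.sqrt 5 - 1) / 2)
    (q₀ q₁ q₂ : ℝ × ℝ)
    (hq₀ : q₀ = (1/2, Real.sqrt 3 / 2)) (hq₁ : q₁ = (0, 0)) (hq₂ : q₂ = (1, 0))
    (F₀ F₁ F₂ : ℝ × ℝ → ℝ × ℝ)
    (hF₀ : ∀ x, F₀ x = ρ ^ 2 • (x - q₀) + q₀)
    (hF₁ : ∀ x, F₁ x = ρ • (x - q₁) + q₁)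
    (hF₂ : ∀ x, F₂ x = ρ • (x - q₂) + q₂)
    (a : ℕ → ℕ)
    (ha : ∀ n, a n = Set.ncard {g : ℝ × ℝ → ℝ × ℝ |
      ∃ w : Fin n → Fin 2,
        g = (List.ofFn fun i => if w i = 0 then F₁ else F₂).foldr (· ∘ ·) F₀}) :
    ∃ c₁ c₂ : ℝ, 0 < c₁ ∧ 0 < c₂ ∧
      ∀ n : ℕ, 1 ≤ n → c₁ * ρ ^ (-(n : ℝ)) ≤ (a n : ℝ) ∧ (a n : ℝ) ≤ c₂ * ρ ^ (-(n : ℝ)) :=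
  stmt_2_general ρ hρ q₁ q₂ hq₁ hq₂ F₀ F₁ F₂ hF₁ hF₂ a ha
end

section
/- Suppose 𝓓 and 𝓓' are two resistance forms on a finite set V₀, and suppose there are renormalization operators satisfying 𝓡𝓓 = λ𝓓 and 𝓡𝓓' = λ'𝓓', where 𝓡 is defined by tracing a form Ψ (built linearly and monotonically from the input form) back to V₀ via energy minimization. Then λ = λ'. More precisely: if for every form 𝓓 and every u ∈ l(V₀), 𝓡𝓓(u) = inf{Ψ𝓓(f) : f|_{V₀} = u}, where Ψ is linear in 𝓓 and monotone (𝓓' ≤ θ𝓓 pointwise on quadratic forms implies Ψ𝓓' ≤ θΨ𝓓), and 𝓡𝓓 = λ𝓓, 𝓡𝓓' = λ'𝓓' with 𝓓, 𝓓' nondegenerate, then λ = λ'. -/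
theorem stmt_6 {V Y : Type*}
    (res : (Y → ℝ) → (V → ℝ))
    (Ψ : ((V → ℝ) → ℝ) → ((Y → ℝ) → ℝ))
    (D D' : (V → ℝ) → ℝ) (lam lam' : ℝ)
    (R : ((V → ℝ) → ℝ) → ((V → ℝ) → ℝ))
    (hmono : ∀ (A B : (V → ℝ) → ℝ) (θ : ℝ), 0 ≤ θ →
      (∀ v, A v ≤ θ * B v) → ∀ f, Ψ A f ≤ θ * Ψ B f)
    (hR : ∀ (A : (V → ℝ) → ℝ) (u : V → ℝ),
      R A u = sInf {x : ℝ | ∃ f : Y → ℝ, res f = u ∧ x = Ψ A f})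
    (hharm : ∀ (A : (V → ℝ) → ℝ) (u : V → ℝ),
      ∃ f : Y → ℝ, res f = u ∧ Ψ A f = R A u)
    (heig : ∀ u, R D u = lam * D u)
    (heig' : ∀ u, R D' u = lam' * D' u)
    (hθ : ∃ θ : ℝ, 0 < θ ∧ (∀ v, D' v ≤ θ * D v) ∧ ∃ u, D' u = θ * D u ∧ 0 < D u)
    (hθ' : ∃ θ : ℝ, 0 < θ ∧ (∀ v, D v ≤ θ * D' v) ∧ ∃ u, D u = θ * D' u ∧ 0 < D' u) :
    lam = lam' := by
  -- transfer of BddBelow between the traced sets of two comparable forms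
  have trans : ∀ (C E : (V → ℝ) → ℝ) (κ : ℝ), 0 < κ → (∀ v, C v ≤ κ * E v) →
      ∀ u : V → ℝ, BddBelow {x : ℝ | ∃ f : Y → ℝ, res f = u ∧ x = Ψ C f} →
      BddBelow {x : ℝ | ∃ f : Y → ℝ, res f = u ∧ x = Ψ E f} := by
    intro C E κ hκ hCE u ⟨c, hc⟩
    refine ⟨c / κ, ?_⟩
    rintro x ⟨f, hf, rfl⟩
    have h1 : Ψ C f ≤ κ * Ψ E f := hmono C E κ hκ.le hCE f
    have h2 : c ≤ Ψ C f := hc ⟨f, hf, rfl⟩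
    rw [div_le_iff₀ hκ]
    nlinarith
  have key : ∀ (A B : (V → ℝ) → ℝ) (a b θ₁ θ₂ : ℝ),
      (∀ u, R A u = a * A u) → (∀ u, R B u = b * B u) →
      0 < θ₁ → (∀ v, B v ≤ θ₁ * A v) →
      0 < θ₂ → (∀ v, A v ≤ θ₂ * B v) →
      ∀ u : V → ℝ, B u = θ₁ * A u → 0 < A u →
      b ≤ a ∨ (a = 0 ∧ b = 0) := by
    intro A B a b θ₁ θ₂ hA hB hθ₁ hBA hθ₂ hAB u hu hupos
    by_cases hbdd : BddBelow {x : ℝ | ∃ f : Y → ℝ, res f = u ∧ x = Ψ A f}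
    · left
      have hbddB := trans A B θ₂ hθ₂ hAB u hbdd
      obtain ⟨f, hf, hPf⟩ := hharm A u
      have h1 : R B u ≤ Ψ B f := by
        rw [hR B u]
        exact csInf_le hbddB ⟨f, hf, rfl⟩
      have h2 : Ψ B f ≤ θ₁ * Ψ A f := hmono B A θ₁ hθ₁.le hBA f
      have h3 : b * (θ₁ * A u) ≤ θ₁ * (a * A u) := by
        rw [← hu, ← hB u]
        calc R B u ≤ Ψ B f := h1
          _ ≤ θ₁ * Ψ A f := h2
          _ = θ₁ * (a * A u) := by rw [hPf, hA u]
      have hpos : 0 < θ₁ * A u := mul_pos hθ₁ hupos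
      nlinarith
    · right
      have hbddB : ¬ BddBelow {x : ℝ | ∃ f : Y → ℝ, res f = u ∧ x = Ψ B f} := by
        intro h
        exact hbdd (trans B A θ₁ hθ₁ hBA u h)
      have hA0 : R A u = 0 := by rw [hR A u]; exact Real.sInf_of_not_bddBelow hbdd
      have hB0 : R B u = 0 := by rw [hR B u]; exact Real.sInf_of_not_bddBelow hbddB
      have ha : a * A u = 0 := by rw [← hA u]; exact hA0
      have hb : b * (θ₁ * A u) = 0 := by rw [← hu, ← hB u]; exact hB0
      constructor
      · rcases mul_eq_zero.mp ha with h | h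
        · exact h
        · exact absurd h hupos.ne'
      · rcases mul_eq_zero.mp hb with h | h
        · exact h
        · exact absurd h (mul_pos hθ₁ hupos).ne'
  obtain ⟨θ₁, hθ₁, hD'D, u₁, hu₁, hu₁pos⟩ := hθ
  obtain ⟨θ₂, hθ₂, hDD', u₂, hu₂, hu₂pos⟩ := hθ'
  have h1 := key D D' lam lam' θ₁ θ₂ heig heig' hθ₁ hD'D hθ₂ hDD' u₁ hu₁ hu₁pos
  have h2 := key D' D lam' lam θ₂ θ₁ heig' heig hθ₂ hDD' hθ₁ hD'D u₂ hu₂ hu₂pos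
  rcases h1 with h1 | ⟨h1a, h1b⟩ <;> rcases h2 with h2 | ⟨h2a, h2b⟩ <;> linarith
end

section
/- Let ρ = (√5−1)/2 and let λ : (ρ, 1) → (0, 1) be a continuous, nonincreasing function satisfying (1/(1−r) − r/(2+2r+2r²))^{−1} ≤ λ(r) ≤ 2/(2+r) for all r ∈ (ρ, 1). Then there exists a unique r ∈ (ρ, 1) such that λ(r) = r². -/
/-!
The bounds on `λ` put its graph above the parabola `r ↦ r²` at `r = 31/50` (just to the right
of `ρ ≈ 0.618`) and below it at `r = 19/20`, so continuity gives a crossing by the intermediate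
value theorem. A nonincreasing function meets a strictly increasing one at most once, which gives
uniqueness.
-/

open Set

theorem AntitoneOn.subsingleton_setOf_eq_of_strictMonoOn {α β : Type*} [LinearOrder α]
    [PartialOrder β] {s : Set α} {f g : α → β} (hf : AntitoneOn f s) (hg : StrictMonoOn g s) :
    {x | x ∈ s ∧ f x = g x}.Subsingleton := by
  rintro x ⟨hxs, hx⟩ y ⟨hys, hy⟩
  by_contra hne
  wlog hxy : x < y generalizing x y
  · exact this hys hy hxs hx (Ne.symm hne) (lt_of_le_of_ne (not_lt.1 hxy) (Ne.symm hne))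
  exact lt_irrefl (g x) <| calc
    g x < g y := hg hxs hys hxy
    _ = f y := hy.symm
    _ ≤ f x := hf hxs hys hxy.le
    _ = g x := hx

theorem sqrt_five_sub_one_div_two_mem_Ioo : (√5 - 1) / 2 ∈ Ioo (0 : ℝ) (31 / 50) := by
  have h_gt : 1 < √5 := Real.lt_sqrt_of_sq_lt (by norm_num)
  have h_lt : √5 < 56 / 25 := (Real.sqrt_lt' (by norm_num)).2 (by norm_num)
  constructor <;> linarith

theorem stmt_8_general (ρ : ℝ) (hρ : ρ = (Real.sqrt 5 - 1) / 2)
    (lam : ℝ → ℝ)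
    (hcont : ContinuousOn lam (Set.Ioo ρ 1))
    (hmono : ∀ r₁ ∈ Set.Ioo ρ 1, ∀ r₂ ∈ Set.Ioo ρ 1, r₁ ≤ r₂ → lam r₂ ≤ lam r₁)
    (hbound : ∀ r ∈ Set.Ioo ρ 1,
      (1 / (1 - r) - r / (2 + 2 * r + 2 * r ^ 2))⁻¹ ≤ lam r ∧ lam r ≤ 2 / (2 + r)) :
    ∃! r : ℝ, r ∈ Set.Ioo ρ 1 ∧ lam r = r ^ 2 := by
  obtain ⟨hρ_pos, hρ_lt⟩ : ρ ∈ Ioo 0 (31 / 50) := hρ ▸ sqrt_five_sub_one_div_two_mem_Ioo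
  have ha : (31 / 50 : ℝ) ∈ Ioo ρ 1 := ⟨hρ_lt, by norm_num⟩
  have hb : (19 / 20 : ℝ) ∈ Ioo ρ 1 := ⟨by linarith, by norm_num⟩
  have below_at_a : (31 / 50 : ℝ) ^ 2 ≤ lam (31 / 50) := le_trans (by norm_num) (hbound _ ha).1
  have above_at_b : lam (19 / 20) ≤ (19 / 20 : ℝ) ^ 2 := (hbound _ hb).2.trans (by norm_num)
  obtain ⟨r, hr, hr_eq⟩ := isPreconnected_Ioo.intermediate_value₂ ha hb
    (continuous_pow 2).continuousOn hcont below_at_a above_at_b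
  have hsq : StrictMonoOn (fun r : ℝ ↦ r ^ 2) (Ioo ρ 1) :=
    (pow_left_strictMonoOn₀ two_ne_zero).mono fun x hx ↦ (hρ_pos.trans hx.1).le
  have hanti : AntitoneOn lam (Ioo ρ 1) := hmono
  exact ⟨r, ⟨hr, hr_eq.symm⟩, fun y hy ↦
    hanti.subsingleton_setOf_eq_of_strictMonoOn hsq hy ⟨hr, hr_eq.symm⟩⟩

theorem stmt_8 (ρ : ℝ) (hρ : ρ = (Real.sqrt 5 - 1) / 2)
    (lam : ℝ → ℝ)
    (hcont : ContinuousOn lam (Set.Ioo ρ 1))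
    (hmono : ∀ r₁ ∈ Set.Ioo ρ 1, ∀ r₂ ∈ Set.Ioo ρ 1, r₁ ≤ r₂ → lam r₂ ≤ lam r₁)
    (hrange : ∀ r ∈ Set.Ioo ρ 1, 0 < lam r ∧ lam r < 1)
    (hbound : ∀ r ∈ Set.Ioo ρ 1,
      (1 / (1 - r) - r / (2 + 2 * r + 2 * r ^ 2))⁻¹ ≤ lam r ∧ lam r ≤ 2 / (2 + r)) :
    ∃! r : ℝ, r ∈ Set.Ioo ρ 1 ∧ lam r = r ^ 2 :=
  stmt_8_general ρ hρ lam hcont hmono hbound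
end
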